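/- arXiv:1310.0195 — 3 statements merged into one kernel-verified Lean document; each statement's English description precedes it below -/
import Mathlib

section
/- Let ξ be a transcendental real number, let a, b, c, d, γ be natural numbers (with γ > 0), and let μ be a nonzero rational number. If a/(aξ+γ) − b/(bξ+γ) = μ(c/(cξ+γ) − d/(dξ+γ)), then either (a,c)=(b,d), or μ=1 and (a,b)=(c,d), or μ=−1 and (a,b)=(d,c). -/
/-!
Since `a / (a ξ + γ) - b / (b ξ + γ) = γ (a - b) / ((a ξ + γ) (b ξ + γ))`, clearing denominators
turns the hypothesis into a quadratic equation in `ξ` with rational coefficients. As `ξ` is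
transcendental, the coefficients vanish: `(a - b) (c X + γ) (d X + γ) = μ (c - d) (a X + γ) (b X + γ)`.
The constant terms give `a - b = μ (c - d)`, and then the other coefficients force `{c, d} = {a, b}`
unless `a = b`.
-/

open Polynomial

theorem Transcendental.eq_zero_of_add_mul_add_mul_sq_eq_zero {R A : Type*} [CommRing R] [Ring A]
    [Algebra R A] {x : A} (hx : Transcendental R x) {p q r : R}
    (h : algebraMap R A p + algebraMap R A q * x + algebraMap R A r * x ^ 2 = 0) :
    p = 0 ∧ q = 0 ∧ r = 0 := by
  have hpoly : (C p + C q * X + C r * X ^ 2 : R[X]) = 0 :=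
    (transcendental_iff_injective.mp hx).eq_iff.mp (by simpa [Algebra.smul_def] using h)
  refine ⟨?_, ?_, ?_⟩
  · simpa using congrArg (coeff · 0) hpoly
  · simpa using congrArg (coeff · 1) hpoly
  · simpa using congrArg (coeff · 2) hpoly

theorem Irrational.natCast_mul_add_natCast_ne_zero {ξ : ℝ} (hξ : Irrational ξ) (n : ℕ) {γ : ℕ}
    (hγ : γ ≠ 0) : (n : ℝ) * ξ + γ ≠ 0 := by
  rcases eq_or_ne n 0 with rfl | hn
  · simpa using hγ
  · exact ((hξ.natCast_mul hn).add_natCast γ).ne_zero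

theorem div_mul_add_sub_div_mul_add {K : Type*} [Field K] {a b x g : K}
    (ha : a * x + g ≠ 0) (hb : b * x + g ≠ 0) :
    a / (a * x + g) - b / (b * x + g) = g * (a - b) / ((a * x + g) * (b * x + g)) := by
  rw [div_sub_div _ _ ha hb]
  ring

/-- The hypotheses compare the coefficients of `(a - b) (X + c) (X + d)` and
`μ (c - d) (X + a) (X + b)`; unless `a = b`, Vieta gives `{c, d} = {a, b}`. -/
theorem eq_or_swap_of_sub_mul_vieta {K : Type*} [Field K] {a b c d μ : K} (hμ : μ ≠ 0)
    (h₀ : a - b = μ * (c - d)) (h₁ : (a - b) * (c + d) = μ * (c - d) * (a + b))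
    (h₂ : (a - b) * (c * d) = μ * (c - d) * (a * b)) :
    (a = b ∧ c = d) ∨ (μ = 1 ∧ a = c ∧ b = d) ∨ (μ = -1 ∧ a = d ∧ b = c) := by
  rcases eq_or_ne a b with hab | hab
  · left
    refine ⟨hab, ?_⟩
    rw [hab, sub_self, zero_eq_mul] at h₀
    exact sub_eq_zero.mp (h₀.resolve_left hμ)
  have hA : a - b ≠ 0 := sub_ne_zero.mpr hab
  have hsum : c + d = a + b := mul_left_cancel₀ hA (by rw [h₁, ← h₀])
  have hprod : c * d = a * b := mul_left_cancel₀ hA (by rw [h₂, ← h₀])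
  have hroot : (a - c) * (a - d) = 0 := by linear_combination (-a) * hsum + hprod
  right
  rcases mul_eq_zero.mp hroot with hac | had
  · have hac : a = c := sub_eq_zero.mp hac
    have hbd : b = d := by linear_combination -hsum - hac
    subst hac hbd
    exact Or.inl ⟨mul_right_cancel₀ hA (by linear_combination -h₀), rfl, rfl⟩
  · have had : a = d := sub_eq_zero.mp had
    have hbc : b = c := by linear_combination -hsum - had
    subst had hbc
    exact Or.inr ⟨mul_right_cancel₀ hA (by linear_combination h₀), rfl, rfl⟩

theorem stmt_0 (ξ : ℝ) (hξ : Transcendental ℚ ξ) (a b c d γ : ℕ) (hγ : 0 < γ)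
    (μ : ℚ) (hμ : μ ≠ 0)
    (h : (a : ℝ) / (a * ξ + γ) - b / (b * ξ + γ)
        = μ * ((c : ℝ) / (c * ξ + γ) - d / (d * ξ + γ))) :
    (a = b ∧ c = d) ∨ (μ = 1 ∧ a = c ∧ b = d) ∨ (μ = -1 ∧ a = d ∧ b = c) := by
  have hden (n : ℕ) := hξ.irrational.natCast_mul_add_natCast_ne_zero n hγ.ne'
  rw [div_mul_add_sub_div_mul_add (hden a) (hden b), div_mul_add_sub_div_mul_add (hden c) (hden d),
    mul_div_assoc', div_eq_div_iff (mul_ne_zero (hden a) (hden b))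
      (mul_ne_zero (hden c) (hden d))] at h
  have hγQ : (γ : ℚ) ≠ 0 := Nat.cast_ne_zero.mpr hγ.ne'
  obtain ⟨h₀, h₁, h₂⟩ := hξ.eq_zero_of_add_mul_add_mul_sq_eq_zero
    (p := ((a - b) - μ * (c - d)) * γ ^ 3)
    (q := ((a - b) * (c + d) - μ * (c - d) * (a + b)) * γ ^ 2)
    (r := ((a - b) * (c * d) - μ * (c - d) * (a * b)) * γ) (by
      simp only [eq_ratCast]; push_cast; linear_combination h)
  have hcases := eq_or_swap_of_sub_mul_vieta (a := (a : ℚ)) (b := b) (c := c) (d := d) hμ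
    (by simpa [sub_eq_zero, hγQ] using h₀) (by simpa [sub_eq_zero, hγQ] using h₁)
    (by simpa [sub_eq_zero, hγQ] using h₂)
  exact_mod_cast hcases
end

section
/- Let n be an odd positive integer and j₁, k₁, j₁', k₁' positive integers satisfying j₁² − k₁² = j₁'² − k₁'² and (k₁² − k₁'²)(4j₁² − n²)(4j₁'² − n²) = (j₁² − j₁'²)(4k₁² − n²)(4k₁'² − n²). Then either (k₁ = k₁' and j₁ = j₁') or (k₁ = j₁ and k₁' = j₁'). -/
theorem stmt_7 (n j₁ k₁ j₁' k₁' : ℕ) (hn : 0 < n) (hodd : Odd n)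
    (hj₁ : 0 < j₁) (hk₁ : 0 < k₁) (hj₁' : 0 < j₁') (hk₁' : 0 < k₁')
    (h1 : (j₁ : ℤ) ^ 2 - (k₁ : ℤ) ^ 2 = (j₁' : ℤ) ^ 2 - (k₁' : ℤ) ^ 2)
    (h2 : ((k₁ : ℤ) ^ 2 - (k₁' : ℤ) ^ 2) * (4 * (j₁ : ℤ) ^ 2 - (n : ℤ) ^ 2)
            * (4 * (j₁' : ℤ) ^ 2 - (n : ℤ) ^ 2)
        = ((j₁ : ℤ) ^ 2 - (j₁' : ℤ) ^ 2) * (4 * (k₁ : ℤ) ^ 2 - (n : ℤ) ^ 2)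
            * (4 * (k₁' : ℤ) ^ 2 - (n : ℤ) ^ 2)) :
    (k₁ = k₁' ∧ j₁ = j₁') ∨ (k₁ = j₁ ∧ k₁' = j₁') := by
  by_cases hkk : (k₁ : ℤ) ^ 2 = (k₁' : ℤ) ^ 2
  · left
    have hk : k₁ = k₁' := by nlinarith [hkk, hk₁, hk₁']
    have hjj : (j₁ : ℤ) ^ 2 = (j₁' : ℤ) ^ 2 := by linarith [h1, hkk]
    have hj : j₁ = j₁' := by nlinarith [hjj, hj₁, hj₁']
    exact ⟨hk, hj⟩
  · right
    have hd : (k₁ : ℤ) ^ 2 - (k₁' : ℤ) ^ 2 ≠ 0 := sub_ne_zero.mpr hkk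
    have hjj' : (j₁ : ℤ) ^ 2 - (j₁' : ℤ) ^ 2 = (k₁ : ℤ) ^ 2 - (k₁' : ℤ) ^ 2 := by
      linarith [h1]
    have h3 : (4 * (j₁ : ℤ) ^ 2 - (n : ℤ) ^ 2) * (4 * (j₁' : ℤ) ^ 2 - (n : ℤ) ^ 2)
        = (4 * (k₁ : ℤ) ^ 2 - (n : ℤ) ^ 2) * (4 * (k₁' : ℤ) ^ 2 - (n : ℤ) ^ 2) := by
      have := h2
      rw [hjj'] at this
      have h4 : ((k₁ : ℤ) ^ 2 - (k₁' : ℤ) ^ 2) *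
          ((4 * (j₁ : ℤ) ^ 2 - (n : ℤ) ^ 2) * (4 * (j₁' : ℤ) ^ 2 - (n : ℤ) ^ 2))
          = ((k₁ : ℤ) ^ 2 - (k₁' : ℤ) ^ 2) *
          ((4 * (k₁ : ℤ) ^ 2 - (n : ℤ) ^ 2) * (4 * (k₁' : ℤ) ^ 2 - (n : ℤ) ^ 2)) := by
        ring_nf
        ring_nf at this
        linarith [this]
      exact mul_left_cancel₀ hd h4
    set s : ℤ := (j₁ : ℤ) ^ 2 - (k₁ : ℤ) ^ 2 with hs
    have key : s * (2 * ((k₁ : ℤ) ^ 2 + (k₁' : ℤ) ^ 2 + s) - (n : ℤ) ^ 2) = 0 := by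
      have h1' : (j₁' : ℤ) ^ 2 = (k₁' : ℤ) ^ 2 + s := by rw [hs]; linarith [h1]
      have hj1 : (j₁ : ℤ) ^ 2 = (k₁ : ℤ) ^ 2 + s := by rw [hs]; ring
      rw [h1', hj1] at h3
      nlinarith [h3]
    have hoddn : Odd ((n : ℤ) ^ 2) := ((Int.odd_coe_nat n).mpr hodd).pow
    have hne : 2 * ((k₁ : ℤ) ^ 2 + (k₁' : ℤ) ^ 2 + s) - (n : ℤ) ^ 2 ≠ 0 := by
      intro h
      rcases hoddn with ⟨m, hm⟩
      omega
    have hs0 : s = 0 := by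
      rcases mul_eq_zero.mp key with h | h
      · exact h
      · exact absurd h hne
    have hsq1 : (j₁ : ℤ) ^ 2 = (k₁ : ℤ) ^ 2 := by rw [hs] at hs0; linarith
    have hsq2 : (j₁' : ℤ) ^ 2 = (k₁' : ℤ) ^ 2 := by linarith [h1, hsq1]
    have hn1 : k₁ ^ 2 = j₁ ^ 2 := by exact_mod_cast hsq1.symm
    have hn2 : k₁' ^ 2 = j₁' ^ 2 := by exact_mod_cast hsq2.symm
    exact ⟨Nat.pow_left_injective two_ne_zero hn1, Nat.pow_left_injective two_ne_zero hn2⟩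
end

section
/- Let n be an even positive integer and j₁, k₁ positive integers. Then ∫₀^π sin(n x) sin(j₁ x) sin(k₁ x) dx ≠ 0 if and only if j₁ + k₁ is odd. -/
/-!
By the product-to-sum formula, `4 sin(ax) sin(bx) sin(cx)` is a signed sum of `sin(mx)` with
`m ∈ {a + b - c, b + c - a, c + a - b, a + b + c}`, and `∫₀^π sin(mx) dx = (1 - (-1)^m) / m`.
All four frequencies have the parity of `a + b + c`: if it is even every term vanishes, and if
it is odd the terms add up to `4abc / ((a + b - c)(b + c - a)(c + a - b)(a + b + c))`, which is
nonzero. For `n` even, `n + j + k` and `j + k` have the same parity.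
-/

open Real intervalIntegral

theorem four_mul_sin_mul_sin_mul_sin (x y z : ℝ) :
    4 * (sin x * sin y * sin z) =
      sin (x + y - z) + sin (y + z - x) + sin (z + x - y) - sin (x + y + z) := by
  simp only [sin_add, sin_sub, cos_add]
  ring

theorem integral_sin_int_mul (m : ℤ) :
    ∫ x in (0 : ℝ)..π, sin (m * x) = (1 - (-1) ^ m) / m := by
  rcases eq_or_ne m 0 with rfl | hm
  · simp
  · rw [integral_comp_mul_left _ (Int.cast_ne_zero.mpr hm), integral_sin, mul_zero, cos_zero,
      cos_int_mul_pi, smul_eq_mul, inv_mul_eq_div]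

theorem integral_sin_int_mul_of_even {m : ℤ} (hm : Even m) :
    ∫ x in (0 : ℝ)..π, sin (m * x) = 0 := by
  rw [integral_sin_int_mul, hm.neg_one_zpow, sub_self, zero_div]

theorem integral_sin_int_mul_of_odd {m : ℤ} (hm : Odd m) :
    ∫ x in (0 : ℝ)..π, sin (m * x) = 2 / m := by
  rw [integral_sin_int_mul, hm.neg_one_zpow]
  norm_num

theorem integral_sin_mul_sin_mul_sin (a b c : ℤ) :
    ∫ x in (0 : ℝ)..π, sin (a * x) * sin (b * x) * sin (c * x) =
      ((∫ x in (0 : ℝ)..π, sin ((a + b - c : ℤ) * x)) +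
        (∫ x in (0 : ℝ)..π, sin ((b + c - a : ℤ) * x)) +
        (∫ x in (0 : ℝ)..π, sin ((c + a - b : ℤ) * x)) -
        ∫ x in (0 : ℝ)..π, sin ((a + b + c : ℤ) * x)) / 4 := by
  have hint (m : ℤ) : IntervalIntegrable (fun x : ℝ ↦ sin (m * x)) MeasureTheory.volume 0 π :=
    (continuous_sin.comp (continuous_const_mul _)).intervalIntegrable _ _
  rw [← integral_add (hint _) (hint _), ← integral_add ((hint _).add (hint _)) (hint _),
    ← integral_sub (((hint _).add (hint _)).add (hint _)) (hint _), ← integral_div]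
  refine integral_congr fun x _ ↦ ?_
  rw [eq_div_iff four_ne_zero, mul_comm, four_mul_sin_mul_sin_mul_sin]
  push_cast
  ring_nf

theorem Int.cast_ne_zero_of_odd {R : Type*} [AddGroupWithOne R] [CharZero R] {m : ℤ}
    (hm : Odd m) : (m : R) ≠ 0 :=
  Int.cast_ne_zero.mpr fun h0 ↦ by simp [h0] at hm

theorem even_add_sub_of_even_add_add {a b c : ℤ} (h : Even (a + b + c)) :
    Even (a + b - c) ∧ Even (b + c - a) ∧ Even (c + a - b) := by
  simp only [Int.even_iff] at *
  omega

theorem odd_add_sub_of_odd_add_add {a b c : ℤ} (h : Odd (a + b + c)) :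
    Odd (a + b - c) ∧ Odd (b + c - a) ∧ Odd (c + a - b) := by
  simp only [Int.odd_iff] at *
  omega

theorem integral_sin_mul_sin_mul_sin_of_even {a b c : ℤ} (h : Even (a + b + c)) :
    ∫ x in (0 : ℝ)..π, sin (a * x) * sin (b * x) * sin (c * x) = 0 := by
  obtain ⟨hab, hbc, hca⟩ := even_add_sub_of_even_add_add h
  rw [integral_sin_mul_sin_mul_sin, integral_sin_int_mul_of_even hab,
    integral_sin_int_mul_of_even hbc, integral_sin_int_mul_of_even hca,
    integral_sin_int_mul_of_even h]
  norm_num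

theorem integral_sin_mul_sin_mul_sin_of_odd {a b c : ℤ} (h : Odd (a + b + c)) :
    ∫ x in (0 : ℝ)..π, sin (a * x) * sin (b * x) * sin (c * x) =
      ((4 * a * b * c : ℤ) : ℝ) / ((a + b - c) * (b + c - a) * (c + a - b) * (a + b + c) : ℤ) := by
  obtain ⟨hab, hbc, hca⟩ := odd_add_sub_of_odd_add_add h
  have := Int.cast_ne_zero_of_odd (R := ℝ) hab
  have := Int.cast_ne_zero_of_odd (R := ℝ) hbc
  have := Int.cast_ne_zero_of_odd (R := ℝ) hca
  have := Int.cast_ne_zero_of_odd (R := ℝ) h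
  rw [integral_sin_mul_sin_mul_sin, integral_sin_int_mul_of_odd hab,
    integral_sin_int_mul_of_odd hbc, integral_sin_int_mul_of_odd hca,
    integral_sin_int_mul_of_odd h]
  push_cast at *
  field_simp
  ring

theorem integral_sin_mul_sin_mul_sin_ne_zero_iff {a b c : ℤ} (ha : a ≠ 0) (hb : b ≠ 0)
    (hc : c ≠ 0) :
    ∫ x in (0 : ℝ)..π, sin (a * x) * sin (b * x) * sin (c * x) ≠ 0 ↔ Odd (a + b + c) := by
  refine ⟨fun h ↦ Int.not_even_iff_odd.mp fun he ↦ h (integral_sin_mul_sin_mul_sin_of_even he),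
    fun h ↦ ?_⟩
  obtain ⟨hab, hbc, hca⟩ := odd_add_sub_of_odd_add_add h
  have hden : Odd ((a + b - c) * (b + c - a) * (c + a - b) * (a + b + c)) :=
    ((hab.mul hbc).mul hca).mul h
  rw [integral_sin_mul_sin_mul_sin_of_odd h]
  exact div_ne_zero (Int.cast_ne_zero.mpr (by simp [ha, hb, hc])) (Int.cast_ne_zero_of_odd hden)

theorem stmt_19 (n j k : ℕ) (hn : 0 < n) (heven : Even n) (hj : 0 < j) (hk : 0 < k) :
    (∫ x in (0:ℝ)..π, sin (n * x) * sin (j * x) * sin (k * x)) ≠ 0 ↔ Odd (j + k) := by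
  have key := integral_sin_mul_sin_mul_sin_ne_zero_iff (a := n) (b := j) (c := k)
    (by omega) (by omega) (by omega)
  simp only [Int.cast_natCast] at key
  rw [key, ← Nat.cast_add, ← Nat.cast_add, Int.odd_coe_nat, add_assoc, ← Nat.not_even_iff_odd,
    ← Nat.not_even_iff_odd, Nat.even_add, iff_true_left heven]
end
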